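/- Let X, E, Y be real normed vector spaces and (Ω, μ) a probability space. Let F : X → E and F* : X → E be arbitrary maps, r : E → E an arbitrary map, g* : X → Y an arbitrary map, h : E → Y Lipschitz continuous with constant L, and ℓ : Y × Y → ℝ Lipschitz in its first argument with constant K_a (uniformly in the second argument) and Lipschitz in its second argument with constant K_b (uniformly in the first argument). Let X1 : Ω → X, X2 : Ω → X, Y1 : Ω → Y be measurable, and assume that the functions ω ↦ ℓ(h(F(X1 ω)), Y1 ω), ω ↦ ℓ(h(F(X2 ω)), g*(X2 ω)), and each of the seven norm terms below are integrable with respect to μ. Then |∫ ℓ(h(F(X1 ω)), Y1 ω) dμ(ω) − ∫ ℓ(h(F(X2 ω)), g*(X2 ω)) dμ(ω)| ≤ K_a·L·∫ ( ‖F(X1 ω) − F*(X1 ω)‖ + ‖F*(X1 ω) − r(F*(X1 ω))‖ + ‖r(F*(X1 ω)) − r(F*(X2 ω))‖ + ‖r(F*(X2 ω)) − r(F(X2 ω))‖ + ‖r(F(X2 ω)) − F(X2 ω)‖ ) dμ(ω) + K_b·∫ ( ‖Y1 ω − g*(X1 ω)‖ + ‖g*(X1 ω) − g*(X2 ω)‖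 ) dμ(ω). -/

import Mathlib

open MeasureTheory

/-!
Pointwise, the loss is Lipschitz in each argument, so the gap between the two integrands is at
most `Ka ‖h (F x₁) - h (F x₂)‖ + Kb ‖y₁ - g* x₂‖ ≤ Ka L ‖F x₁ - F x₂‖ + Kb ‖y₁ - g* x₂‖`.
The triangle inequality along `F x₁, F* x₁, r (F* x₁), r (F* x₂), r (F x₂), F x₂` and along
`y₁, g* x₁, g* x₂` turns this into the integrand of the right-hand side, and integrating the
pointwise bound gives the claim.
-/

theorem abs_sub_le_of_lipschitz_fst_snd {Y : Type*} [SeminormedAddCommGroup Y]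
    {ℓ : Y × Y → ℝ} {Ka Kb : ℝ}
    (hℓa : ∀ (y : Y) (a b : Y), |ℓ (a, y) - ℓ (b, y)| ≤ Ka * ‖a - b‖)
    (hℓb : ∀ (y : Y) (a b : Y), |ℓ (y, a) - ℓ (y, b)| ≤ Kb * ‖a - b‖) (a b y y' : Y) :
    |ℓ (a, y) - ℓ (b, y')| ≤ Ka * ‖a - b‖ + Kb * ‖y - y'‖ := by
  calc |ℓ (a, y) - ℓ (b, y')| = |(ℓ (a, y) - ℓ (b, y)) + (ℓ (b, y) - ℓ (b, y'))| := by ring_nf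
    _ ≤ |ℓ (a, y) - ℓ (b, y)| + |ℓ (b, y) - ℓ (b, y')| := abs_add_le _ _
    _ ≤ Ka * ‖a - b‖ + Kb * ‖y - y'‖ := add_le_add (hℓa _ _ _) (hℓb _ _ _)

theorem norm_sub_le_of_reconstruction {X E : Type*} [SeminormedAddCommGroup E]
    (F Fstar : X → E) (r : E → E) (x₁ x₂ : X) :
    ‖F x₁ - F x₂‖ ≤ ‖F x₁ - Fstar x₁‖ + ‖Fstar x₁ - r (Fstar x₁)‖ +
      ‖r (Fstar x₁) - r (Fstar x₂)‖ + ‖r (Fstar x₂) - r (F x₂)‖ + ‖r (F x₂) - F x₂‖ := by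
  have h₁ := norm_sub_le_norm_sub_add_norm_sub (F x₁) (Fstar x₁) (F x₂)
  have h₂ := norm_sub_le_norm_sub_add_norm_sub (Fstar x₁) (r (Fstar x₁)) (F x₂)
  have h₃ := norm_sub_le_norm_sub_add_norm_sub (r (Fstar x₁)) (r (Fstar x₂)) (F x₂)
  have h₄ := norm_sub_le_norm_sub_add_norm_sub (r (Fstar x₂)) (r (F x₂)) (F x₂)
  linarith

theorem abs_integral_sub_integral_le_of_abs_sub_le {Ω : Type*} [MeasurableSpace Ω]
    {μ : Measure Ω} {f g B : Ω → ℝ} (hf : Integrable f μ) (hg : Integrable g μ)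
    (hB : Integrable B μ) (hfg : ∀ ω, |f ω - g ω| ≤ B ω) :
    |(∫ ω, f ω ∂μ) - ∫ ω, g ω ∂μ| ≤ ∫ ω, B ω ∂μ := by
  rw [← integral_sub hf hg]
  exact (abs_integral_le_integral_abs).trans (integral_mono (hf.sub hg).abs hB hfg)

theorem expected_joint_vs_surrogate_bound_general
    {X E Y : Type*}
    [NormedAddCommGroup E]
    [NormedAddCommGroup Y]
    {Ω : Type*} [MeasurableSpace Ω] (μ : Measure Ω)
    (F Fstar : X → E) (r : E → E) (gstar : X → Y)
    (h : E → Y) (ℓ : Y × Y → ℝ) (L Ka Kb : ℝ)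
    (hL : 0 ≤ L) (hKa : 0 ≤ Ka) (hKb : 0 ≤ Kb)
    (hLip : ∀ a b : E, ‖h a - h b‖ ≤ L * ‖a - b‖)
    (hℓa : ∀ (y : Y) (a b : Y), |ℓ (a, y) - ℓ (b, y)| ≤ Ka * ‖a - b‖)
    (hℓb : ∀ (y : Y) (a b : Y), |ℓ (y, a) - ℓ (y, b)| ≤ Kb * ‖a - b‖)
    (X1 X2 : Ω → X) (Y1 : Ω → Y)
    (hInt1 : Integrable (fun ω => ℓ (h (F (X1 ω)), Y1 ω)) μ)
    (hInt2 : Integrable (fun ω => ℓ (h (F (X2 ω)), gstar (X2 ω))) μ)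
    (hIntA : Integrable (fun ω => ‖F (X1 ω) - Fstar (X1 ω)‖) μ)
    (hIntB : Integrable (fun ω => ‖Fstar (X1 ω) - r (Fstar (X1 ω))‖) μ)
    (hIntC : Integrable (fun ω => ‖r (Fstar (X1 ω)) - r (Fstar (X2 ω))‖) μ)
    (hIntD : Integrable (fun ω => ‖r (Fstar (X2 ω)) - r (F (X2 ω))‖) μ)
    (hIntE : Integrable (fun ω => ‖r (F (X2 ω)) - F (X2 ω)‖) μ)
    (hIntF : Integrable (fun ω => ‖Y1 ω - gstar (X1 ω)‖) μ)
    (hIntG : Integrable (fun ω => ‖gstar (X1 ω) - gstar (X2 ω)‖) μ) :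
    |(∫ ω, ℓ (h (F (X1 ω)), Y1 ω) ∂μ) - ∫ ω, ℓ (h (F (X2 ω)), gstar (X2 ω)) ∂μ| ≤
      Ka * L *
        ∫ ω, (‖F (X1 ω) - Fstar (X1 ω)‖ + ‖Fstar (X1 ω) - r (Fstar (X1 ω))‖ +
          ‖r (Fstar (X1 ω)) - r (Fstar (X2 ω))‖ + ‖r (Fstar (X2 ω)) - r (F (X2 ω))‖ +
          ‖r (F (X2 ω)) - F (X2 ω)‖) ∂μ +
      Kb * ∫ ω, (‖Y1 ω - gstar (X1 ω)‖ + ‖gstar (X1 ω) - gstar (X2 ω)‖) ∂μ := by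
  have hS := (((hIntA.add hIntB).add hIntC).add hIntD).add hIntE
  have hT := hIntF.add hIntG
  rw [← integral_const_mul, ← integral_const_mul,
    ← integral_add (by exact hS.const_mul _) (by exact hT.const_mul _)]
  refine abs_integral_sub_integral_le_of_abs_sub_le hInt1 hInt2
    ((hS.const_mul _).add (hT.const_mul _)) fun ω => ?_
  have hF := norm_sub_le_of_reconstruction F Fstar r (X1 ω) (X2 ω)
  have hY := norm_sub_le_norm_sub_add_norm_sub (Y1 ω) (gstar (X1 ω)) (gstar (X2 ω))
  calc _ ≤ Ka * ‖h (F (X1 ω)) - h (F (X2 ω))‖ + Kb * ‖Y1 ω - gstar (X2 ω)‖ :=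
        abs_sub_le_of_lipschitz_fst_snd hℓa hℓb _ _ _ _
    _ ≤ Ka * (L * ‖F (X1 ω) - F (X2 ω)‖) + Kb * ‖Y1 ω - gstar (X2 ω)‖ := by
        gcongr; exact hLip _ _
    _ ≤ _ := by rw [← mul_assoc]; gcongr

/-- The paper's Proposition in expectation: the difference between the first-task term of
the joint-training statistical risk and the distillation surrogate risk computed on
second-task data is controlled by the expected reconstruction, code and residual terms. -/
theorem expected_joint_vs_surrogate_bound
    {X E Y : Type*} [NormedAddCommGroup X] [NormedSpace ℝ X]
    [NormedAddCommGroup E] [NormedSpace ℝ E]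
    [NormedAddCommGroup Y] [NormedSpace ℝ Y]
    [MeasurableSpace X] [MeasurableSpace Y]
    {Ω : Type*} [MeasurableSpace Ω] (μ : Measure Ω) [IsProbabilityMeasure μ]
    (F Fstar : X → E) (r : E → E) (gstar : X → Y)
    (h : E → Y) (ℓ : Y × Y → ℝ) (L Ka Kb : ℝ)
    (hL : 0 ≤ L) (hKa : 0 ≤ Ka) (hKb : 0 ≤ Kb)
    (hLip : ∀ a b : E, ‖h a - h b‖ ≤ L * ‖a - b‖)
    (hℓa : ∀ (y : Y) (a b : Y), |ℓ (a, y) - ℓ (b, y)| ≤ Ka * ‖a - b‖)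
    (hℓb : ∀ (y : Y) (a b : Y), |ℓ (y, a) - ℓ (y, b)| ≤ Kb * ‖a - b‖)
    (X1 X2 : Ω → X) (Y1 : Ω → Y)
    (hX1 : Measurable X1) (hX2 : Measurable X2) (hY1 : Measurable Y1)
    (hInt1 : Integrable (fun ω => ℓ (h (F (X1 ω)), Y1 ω)) μ)
    (hInt2 : Integrable (fun ω => ℓ (h (F (X2 ω)), gstar (X2 ω))) μ)
    (hIntA : Integrable (fun ω => ‖F (X1 ω) - Fstar (X1 ω)‖) μ)
    (hIntB : Integrable (fun ω => ‖Fstar (X1 ω) - r (Fstar (X1 ω))‖) μ)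
    (hIntC : Integrable (fun ω => ‖r (Fstar (X1 ω)) - r (Fstar (X2 ω))‖) μ)
    (hIntD : Integrable (fun ω => ‖r (Fstar (X2 ω)) - r (F (X2 ω))‖) μ)
    (hIntE : Integrable (fun ω => ‖r (F (X2 ω)) - F (X2 ω)‖) μ)
    (hIntF : Integrable (fun ω => ‖Y1 ω - gstar (X1 ω)‖) μ)
    (hIntG : Integrable (fun ω => ‖gstar (X1 ω) - gstar (X2 ω)‖) μ) :
    |(∫ ω, ℓ (h (F (X1 ω)), Y1 ω) ∂μ) - ∫ ω, ℓ (h (F (X2 ω)), gstar (X2 ω)) ∂μ| ≤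
      Ka * L *
        ∫ ω, (‖F (X1 ω) - Fstar (X1 ω)‖ + ‖Fstar (X1 ω) - r (Fstar (X1 ω))‖ +
          ‖r (Fstar (X1 ω)) - r (Fstar (X2 ω))‖ + ‖r (Fstar (X2 ω)) - r (F (X2 ω))‖ +
          ‖r (F (X2 ω)) - F (X2 ω)‖) ∂μ +
      Kb * ∫ ω, (‖Y1 ω - gstar (X1 ω)‖ + ‖gstar (X1 ω) - gstar (X2 ω)‖) ∂μ :=
  expected_joint_vs_surrogate_bound_general μ F Fstar r gstar h ℓ L Ka Kb hL hKa hKb hLip hℓa hℓb X1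
    X2 Y1 hInt1 hInt2 hIntA hIntB hIntC hIntD hIntE hIntF hIntG
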